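/- arXiv:1802.09932 — 2 statements merged into one kernel-verified Lean document; each statement's English description precedes it below -/
import Mathlib

section
/- Let f_i : ℝ^d → ℝ be convex and L-smooth for each i ∈ [n], let f = (1/n) ∑ f_i, and let x* be a minimizer of f. Then for any x, the average over i of ‖∇f_i(x) − ∇f_i(x*)‖² satisfies (1/n) ∑_{i=1}^n ‖∇f_i(x) − ∇f_i(x*)‖² ≤ 2L (f(x) − f(x*)). -/
/-! Co-coercivity of the gradient of a convex `L`-smooth `g`,
`‖∇g x - ∇g y‖² ≤ 2L (g x - g y - ⟪∇g y, x - y⟫)`, comes from squeezing `g` at the gradient step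
`z = x - L⁻¹ (∇g x - ∇g y)` between its supporting hyperplane at `y` and the quadratic upper
bound at `x` (descent lemma). Averaging over `i`, the linear terms cancel since `x*` is a
critical point of the average. -/

open scoped RealInnerProductSpace Gradient

section Smooth

variable {E : Type*} [NormedAddCommGroup E] [InnerProductSpace ℝ E] [CompleteSpace E]
  {g : E → ℝ}

theorem Differentiable.hasDerivAt_comp_add_smul (hg : Differentiable ℝ g) (x v : E) (t : ℝ) :
    HasDerivAt (fun s : ℝ => g (x + s • v)) ⟪∇ g (x + t • v), v⟫ t := by
  have hline : HasDerivAt (fun s : ℝ => x + s • v) v t := by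
    simpa using ((hasDerivAt_id t).smul_const v).const_add x
  rw [inner_gradient_left]
  exact (hg _).hasFDerivAt.comp_hasDerivAt t hline

theorem ConvexOn.add_inner_gradient_le (hconv : ConvexOn ℝ Set.univ g) (hg : Differentiable ℝ g)
    (x y : E) : g y + ⟪∇ g y, x - y⟫ ≤ g x := by
  have hline : ConvexOn ℝ Set.univ (fun s : ℝ => g (y + s • (x - y))) := by
    have h := hconv.comp_affineMap (AffineMap.lineMap y x)
    rw [Set.preimage_univ] at h
    refine h.congr fun s _ => ?_
    simp [AffineMap.lineMap_apply, add_comm]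
  have hslope := hline.le_slope_of_hasDerivAt (Set.mem_univ 0) (Set.mem_univ 1) zero_lt_one
    (by simpa only [zero_smul, add_zero] using hg.hasDerivAt_comp_add_smul y (x - y) 0)
  simp only [slope_def_field, one_smul, zero_smul, add_zero, sub_zero, div_one] at hslope
  rw [add_sub_cancel] at hslope
  linarith

theorem Differentiable.le_add_inner_gradient_add_sq (hg : Differentiable ℝ g) {L : ℝ}
    (hlip : ∀ a b, ‖∇ g a - ∇ g b‖ ≤ L * ‖a - b‖) (x y : E) :
    g y ≤ g x + ⟪∇ g x, y - x⟫ + L / 2 * ‖y - x‖ ^ 2 := by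
  set v := y - x
  have hderiv_le (t : ℝ) (ht : 0 ≤ t) : ⟪∇ g (x + t • v), v⟫ ≤ ⟪∇ g x, v⟫ + L * t * ‖v‖ ^ 2 := by
    have hcs := real_inner_le_norm (∇ g (x + t • v) - ∇ g x) v
    have hgrad : ‖∇ g (x + t • v) - ∇ g x‖ ≤ L * t * ‖v‖ := by
      simpa [norm_smul, abs_of_nonneg ht, mul_assoc] using hlip (x + t • v) x
    rw [inner_sub_left] at hcs
    nlinarith [norm_nonneg v]
  have hbound (t : ℝ) : HasDerivAt (fun s : ℝ => g x + s * ⟪∇ g x, v⟫ + L / 2 * s ^ 2 * ‖v‖ ^ 2)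
      (⟪∇ g x, v⟫ + L * t * ‖v‖ ^ 2) t := by
    have := (((hasDerivAt_id t).mul_const ⟪∇ g x, v⟫).const_add (g x)).add
      ((((hasDerivAt_pow 2 t).const_mul (L / 2)).mul_const (‖v‖ ^ 2)))
    exact this.congr_deriv (by push_cast; ring)
  have hline := hg.hasDerivAt_comp_add_smul x v
  have := image_le_of_deriv_right_le_deriv_boundary (a := 0) (b := 1)
    (fun t _ => (hline t).continuousAt.continuousWithinAt)
    (fun t _ => (hline t).hasDerivWithinAt) (by simp)
    (fun t _ => (hbound t).continuousAt.continuousWithinAt)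
    (fun t _ => (hbound t).hasDerivWithinAt) (fun t ht => hderiv_le t ht.1) (x := 1) (by simp)
  simpa [v] using this

theorem ConvexOn.norm_sub_gradient_sq_le (hconv : ConvexOn ℝ Set.univ g)
    (hg : Differentiable ℝ g) {L : ℝ} (hL : 0 < L)
    (hlip : ∀ a b, ‖∇ g a - ∇ g b‖ ≤ L * ‖a - b‖) (x y : E) :
    ‖∇ g x - ∇ g y‖ ^ 2 ≤ 2 * L * (g x - g y - ⟪∇ g y, x - y⟫) := by
  set w := ∇ g x - ∇ g y
  set z := x - L⁻¹ • w
  have hdescent := hg.le_add_inner_gradient_add_sq hlip x z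
  have hsupport := hconv.add_inner_gradient_le hg z y
  have hzx : z - x = -(L⁻¹ • w) := by simp [z]
  have hzy : z - y = (x - y) - L⁻¹ • w := by simp only [z]; abel
  have hw : ⟪∇ g x, w⟫ - ⟪∇ g y, w⟫ = ‖w‖ ^ 2 := by
    rw [← inner_sub_left, real_inner_self_eq_norm_sq]
  rw [hzx, inner_neg_right, real_inner_smul_right, norm_neg, norm_smul,
    Real.norm_of_nonneg (inv_nonneg.2 hL.le), mul_pow] at hdescent
  rw [hzy, inner_sub_right, real_inner_smul_right] at hsupport
  have hquad : L / 2 * (L⁻¹ ^ 2 * ‖w‖ ^ 2) = ‖w‖ ^ 2 / (2 * L) := by field_simp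
  have hlin : L⁻¹ * ⟪∇ g x, w⟫ - L⁻¹ * ⟪∇ g y, w⟫ = 2 * (‖w‖ ^ 2 / (2 * L)) := by
    rw [← mul_sub, hw]; field_simp
  have hkey : ‖w‖ ^ 2 / (2 * L) ≤ g x - g y - ⟪∇ g y, x - y⟫ := by linarith
  rwa [div_le_iff₀ (by positivity), mul_comm] at hkey

theorem mul_sum_inner_gradient_eq_zero_of_isLocalMin {ι : Type*} [Fintype ι] {f : ι → E → ℝ}
    {x : E} (hf : ∀ i, DifferentiableAt ℝ (f i) x) (c : ℝ)
    (hmin : IsLocalMin (fun z => c * ∑ i, f i z) x) (v : E) :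
    c * ∑ i, ⟪∇ (f i) x, v⟫ = 0 := by
  have hderiv : HasFDerivAt (fun z => c * ∑ i, f i z) (c • ∑ i, fderiv ℝ (f i) x) x :=
    (HasFDerivAt.fun_sum fun i _ => (hf i).hasFDerivAt).const_mul c
  simpa [inner_gradient_left] using congrArg (· v) (hmin.hasFDerivAt_eq_zero hderiv)

end Smooth

theorem stmt_0_general (d n : ℕ) (L : ℝ) (hL : 0 < L)
    (f : Fin n → EuclideanSpace ℝ (Fin d) → ℝ)
    (hconv : ∀ i, ConvexOn ℝ Set.univ (f i))
    (hdiff : ∀ i, Differentiable ℝ (f i))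
    (hlip : ∀ i x y, ‖gradient (f i) x - gradient (f i) y‖ ≤ L * ‖x - y‖)
    (favg : EuclideanSpace ℝ (Fin d) → ℝ)
    (hfavg : ∀ x, favg x = (1 / n : ℝ) * ∑ i, f i x)
    (xstar : EuclideanSpace ℝ (Fin d))
    (hmin : ∀ x, favg xstar ≤ favg x)
    (x : EuclideanSpace ℝ (Fin d)) :
    (1 / n : ℝ) * ∑ i, ‖gradient (f i) x - gradient (f i) xstar‖ ^ 2
      ≤ 2 * L * (favg x - favg xstar) := by
  have hstationary : (1 / n : ℝ) * ∑ i, ⟪∇ (f i) xstar, x - xstar⟫ = 0 := by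
    refine mul_sum_inner_gradient_eq_zero_of_isLocalMin (fun i => hdiff i xstar) _ ?_ _
    rw [← funext hfavg]
    exact Filter.Eventually.of_forall hmin
  calc (1 / n : ℝ) * ∑ i, ‖∇ (f i) x - ∇ (f i) xstar‖ ^ 2
      ≤ (1 / n : ℝ) * ∑ i, 2 * L * (f i x - f i xstar - ⟪∇ (f i) xstar, x - xstar⟫) := by
        gcongr with i
        exact (hconv i).norm_sub_gradient_sq_le (hdiff i) hL (hlip i) x xstar
    _ = 2 * L * (favg x - favg xstar - (1 / n : ℝ) * ∑ i, ⟪∇ (f i) xstar, x - xstar⟫) := by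
        simp only [hfavg, ← Finset.mul_sum, Finset.sum_sub_distrib]
        ring
    _ = 2 * L * (favg x - favg xstar) := by rw [hstationary, sub_zero]

/-- average co-coercivity bound at a minimizer. -/
theorem stmt_0 (d n : ℕ) (hn : 0 < n) (L : ℝ) (hL : 0 < L)
    (f : Fin n → EuclideanSpace ℝ (Fin d) → ℝ)
    (hconv : ∀ i, ConvexOn ℝ Set.univ (f i))
    (hdiff : ∀ i, Differentiable ℝ (f i))
    (hlip : ∀ i x y, ‖gradient (f i) x - gradient (f i) y‖ ≤ L * ‖x - y‖)
    (favg : EuclideanSpace ℝ (Fin d) → ℝ)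
    (hfavg : ∀ x, favg x = (1 / n : ℝ) * ∑ i, f i x)
    (xstar : EuclideanSpace ℝ (Fin d))
    (hmin : ∀ x, favg xstar ≤ favg x)
    (x : EuclideanSpace ℝ (Fin d)) :
    (1 / n : ℝ) * ∑ i, ‖gradient (f i) x - gradient (f i) xstar‖ ^ 2
      ≤ 2 * L * (favg x - favg xstar) :=
  stmt_0_general d n L hL f hconv hdiff hlip favg hfavg xstar hmin x
end

section
/- One-step inner bound for smooth VR-SGD: Let each f_i be convex and L-smooth, f = (1/n)∑f_i with minimizer x*, and let η = 1/(Lβ) with β > 1. Given x_k and snapshot x̃, let g_i = ∇f_i(x_k) − ∇f_i(x̃) + ∇f(x̃) and x_{k+1}^{(i)} = x_k − η g_i for a uniformly random index i. Then E[f(x_{k+1}^{(i)})] − f(x*) ≤ (2/(β−1))[f(x_k) − f(x*) + f(x̃) − f(x*)] + (Lβ/2) E[‖x* − x_k‖² − ‖x* − x_{k+1}^{(i)}‖²]. -/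
/-!
For each index `i`, the descent lemma for `f` at `x_k`, Young's inequality for the error term
`⟪∇f(x_k) - g_i, x_{k+1} - x_k⟫` with weight `L(β - 1)`, and the three-point identity for the
step `x_{k+1} = x_k - g_i / (Lβ)` bound `f(x_{k+1}^{(i)})` by
`f(x_k) + ⟪g_i, x* - x_k⟫ + (Lβ/2)(‖x* - x_k‖² - ‖x* - x_{k+1}‖²) + ‖g_i - ∇f(x_k)‖² / (2L(β - 1))`.
Averaged over `i`, the estimator `g_i` is unbiased, so convexity turns the inner product into
`f(x*) - f(x_k)`; and the SVRG variance bound (the variance is at most the second moment, and each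
`∇f_i` is co-coercive relative to `x*`) turns the last term into
`2/(β - 1) · [f(x_k) - f(x*) + f(x̃) - f(x*)]`.
-/

open Set
open scoped Gradient RealInnerProductSpace

section Smooth

variable {F : Type*} [NormedAddCommGroup F] [InnerProductSpace ℝ F]

lemma real_inner_le_sq_div_add_sq {u v : F} {c : ℝ} (hc : 0 < c) :
    ⟪u, v⟫ ≤ ‖u‖ ^ 2 / (2 * c) + c / 2 * ‖v‖ ^ 2 := by
  have h : 0 ≤ ‖u - c • v‖ ^ 2 := sq_nonneg _
  rw [norm_sub_sq_real, real_inner_smul_right, norm_smul, Real.norm_of_nonneg hc.le] at h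
  rw [div_add' _ _ _ (by positivity), le_div_iff₀ (by positivity)]
  nlinarith

variable [CompleteSpace F]

def HasLipschitzGradient (L : ℝ) (f : F → ℝ) : Prop :=
  ∀ x y, ‖∇ f x - ∇ f y‖ ≤ L * ‖x - y‖

lemma hasGradientAt_inner_left (c x : F) : HasGradientAt (fun z ↦ ⟪c, z⟫) c x := by
  rw [hasGradientAt_iff_hasFDerivAt]
  exact (InnerProductSpace.toDual ℝ F c).hasFDerivAt

lemma HasGradientAt.sub {f g : F → ℝ} {a b x : F} (hf : HasGradientAt f a x)
    (hg : HasGradientAt g b x) : HasGradientAt (fun z ↦ f z - g z) (a - b) x := by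
  rw [hasGradientAt_iff_hasFDerivAt, map_sub]
  exact hf.hasFDerivAt.sub hg.hasFDerivAt

lemma hasDerivAt_comp_add_smul {f : F → ℝ} {x v : F} {t : ℝ}
    (hf : DifferentiableAt ℝ f (x + t • v)) :
    HasDerivAt (fun s : ℝ ↦ f (x + s • v)) ⟪∇ f (x + t • v), v⟫ t := by
  have hline : HasDerivAt (fun s : ℝ ↦ x + s • v) v t := by
    simpa using ((hasDerivAt_id t).smul_const v).const_add x
  simpa [Function.comp_def, inner_gradient_left] using
    hf.hasFDerivAt.comp_hasDerivAt t hline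

lemma ConvexOn.add_inner_gradient_le_s8 {f : F → ℝ} (hc : ConvexOn ℝ univ f) {x : F}
    (hf : DifferentiableAt ℝ f x) (y : F) : f x + ⟪∇ f x, y - x⟫ ≤ f y := by
  have hline : ConvexOn ℝ univ (fun s : ℝ ↦ f (x + s • (y - x))) := by
    have heq : (fun s : ℝ ↦ f (x + s • (y - x))) = f ∘ AffineMap.lineMap x y := by
      ext s
      simp only [Function.comp_apply, AffineMap.lineMap_apply, vsub_eq_sub, vadd_eq_add,
        add_comm]
    rw [heq]
    simpa using hc.comp_affineMap (AffineMap.lineMap x y)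
  have hd : HasDerivAt (fun s : ℝ ↦ f (x + s • (y - x))) ⟪∇ f x, y - x⟫ 0 := by
    simpa using hasDerivAt_comp_add_smul (v := y - x) (t := 0) (by simpa using hf)
  have := hline.le_slope_of_hasDerivAt (mem_univ 0) (mem_univ 1) one_pos hd
  rwa [slope_def_field, sub_zero, div_one, zero_smul, add_zero, one_smul,
    add_sub_cancel, le_sub_iff_add_le'] at this

lemma HasLipschitzGradient.le_add_inner_gradient_add {f : F → ℝ} {L : ℝ}
    (hL : HasLipschitzGradient L f) (hf : Differentiable ℝ f) (x y : F) :
    f y ≤ f x + ⟪∇ f x, y - x⟫ + L / 2 * ‖y - x‖ ^ 2 := by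
  set v := y - x
  let g : ℝ → ℝ := fun t ↦ f (x + t • v) - t * ⟪∇ f x, v⟫ - L / 2 * t ^ 2 * ‖v‖ ^ 2
  have hg : ∀ t, HasDerivAt g (⟪∇ f (x + t • v) - ∇ f x, v⟫ - L * t * ‖v‖ ^ 2) t := by
    intro t
    have hline := hasDerivAt_comp_add_smul (x := x) (v := v) (hf (x + t • v))
    refine ((hline.sub ((hasDerivAt_id t).mul_const ⟪∇ f x, v⟫)).sub
      (((hasDerivAt_pow 2 t).const_mul (L / 2)).mul_const (‖v‖ ^ 2))).congr_deriv ?_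
    rw [inner_sub_left]
    push_cast
    ring
  have hg' : ∀ t ∈ interior (Ici (0 : ℝ)),
      ⟪∇ f (x + t • v) - ∇ f x, v⟫ - L * t * ‖v‖ ^ 2 ≤ 0 := by
    intro t ht
    rw [interior_Ici, mem_Ioi] at ht
    refine sub_nonpos.2 ?_
    calc ⟪∇ f (x + t • v) - ∇ f x, v⟫
        ≤ ‖∇ f (x + t • v) - ∇ f x‖ * ‖v‖ := real_inner_le_norm _ _
      _ ≤ L * ‖(x + t • v) - x‖ * ‖v‖ := by gcongr; exact hL _ _
      _ = L * t * ‖v‖ ^ 2 := by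
        rw [add_sub_cancel_left, norm_smul, Real.norm_of_nonneg ht.le]; ring
  have hanti := antitoneOn_of_hasDerivWithinAt_nonpos (convex_Ici 0)
    (fun t _ ↦ (hg t).continuousAt.continuousWithinAt) (fun t _ ↦ (hg t).hasDerivWithinAt) hg'
  have := hanti (mem_Ici.2 le_rfl) (mem_Ici.2 zero_le_one) zero_le_one
  simp only [g, v, zero_smul, one_smul, add_zero, add_sub_cancel] at this
  linarith

/-- Compare `f y` with the value of `f` after the gradient step `x - L⁻¹ • ∇ f x`. -/
lemma HasLipschitzGradient.sq_norm_gradient_le {f : F → ℝ} {L : ℝ} (hL₀ : 0 < L)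
    (hL : HasLipschitzGradient L f) (hf : Differentiable ℝ f) {y : F} (hy : ∀ z, f y ≤ f z)
    (x : F) : ‖∇ f x‖ ^ 2 ≤ 2 * L * (f x - f y) := by
  have h := hL.le_add_inner_gradient_add hf x (x - L⁻¹ • ∇ f x)
  rw [sub_sub_cancel_left, inner_neg_right, real_inner_smul_right, norm_neg, norm_smul,
    real_inner_self_eq_norm_sq, Real.norm_of_nonneg (inv_nonneg.2 hL₀.le)] at h
  have := hy (x - L⁻¹ • ∇ f x)
  have hq : L / 2 * (L⁻¹ * ‖∇ f x‖) ^ 2 = L⁻¹ / 2 * ‖∇ f x‖ ^ 2 := by field_simp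
  have : L⁻¹ / 2 * ‖∇ f x‖ ^ 2 ≤ f x - f y := by linarith
  calc ‖∇ f x‖ ^ 2 = 2 * L * (L⁻¹ / 2 * ‖∇ f x‖ ^ 2) := by field_simp
    _ ≤ 2 * L * (f x - f y) := by gcongr

lemma ConvexOn.sq_norm_gradient_sub_le {f : F → ℝ} {L : ℝ} (hc : ConvexOn ℝ univ f)
    (hL₀ : 0 < L) (hL : HasLipschitzGradient L f) (hf : Differentiable ℝ f) (x y : F) :
    ‖∇ f x - ∇ f y‖ ^ 2 ≤ 2 * L * (f x - f y - ⟪∇ f y, x - y⟫) := by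
  -- `φ` is convex, `L`-smooth and minimised at `y`
  set φ : F → ℝ := fun z ↦ f z - ⟪∇ f y, z⟫
  have hφ : ∀ z, HasGradientAt φ (∇ f z - ∇ f y) z := fun z ↦
    (hf z).hasGradientAt.sub (hasGradientAt_inner_left _ z)
  have hφL : HasLipschitzGradient L φ := fun a b ↦ by
    simpa [(hφ a).gradient, (hφ b).gradient] using hL a b
  have hφmin : ∀ z, φ y ≤ φ z := fun z ↦ by
    have := hc.add_inner_gradient_le_s8 (hf y) z
    simp only [φ, inner_sub_right] at this ⊢
    linarith
  have := hφL.sq_norm_gradient_le hL₀ (fun z ↦ (hφ z).differentiableAt) hφmin x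
  rwa [(hφ x).gradient, show φ x - φ y = f x - f y - ⟪∇ f y, x - y⟫ by
    simp only [φ, inner_sub_right]; ring] at this

lemma HasLipschitzGradient.apply_sub_smul_le {f : F → ℝ} {L β η : ℝ} (hL₀ : 0 < L)
    (hβ : 1 < β) (hη : η = 1 / (L * β)) (hL : HasLipschitzGradient L f) (hf : Differentiable ℝ f)
    (x z g : F) :
    f (x - η • g) ≤ f x + ⟪g, z - x⟫ + L * β / 2 * (‖z - x‖ ^ 2 - ‖z - (x - η • g)‖ ^ 2)
      + ‖g - ∇ f x‖ ^ 2 / (2 * (L * (β - 1))) := by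
  have hη₀ : 0 ≤ η := by rw [hη]; positivity
  have hLβη : L * β * η = 1 := by rw [hη]; field_simp
  have descent := hL.le_add_inner_gradient_add hf x (x - η • g)
  have young := real_inner_le_sq_div_add_sq (u := ∇ f x - g) (v := -(η • g))
    (c := L * (β - 1)) (by nlinarith)
  have three_point :
      ‖z - (x - η • g)‖ ^ 2 = ‖z - x‖ ^ 2 + 2 * η * ⟪g, z - x⟫ + η ^ 2 * ‖g‖ ^ 2 := by
    rw [show z - (x - η • g) = (z - x) + η • g by abel, norm_add_sq_real, real_inner_smul_right,
      real_inner_comm, norm_smul, Real.norm_of_nonneg hη₀]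
    ring
  rw [sub_sub_cancel_left, inner_neg_right, real_inner_smul_right, norm_neg, norm_smul,
    Real.norm_of_nonneg hη₀] at descent
  rw [inner_neg_right, real_inner_smul_right, inner_sub_left, real_inner_self_eq_norm_sq,
    norm_neg, norm_smul, Real.norm_of_nonneg hη₀, norm_sub_rev] at young
  rw [three_point]
  linear_combination descent + young + (η * ‖g‖ ^ 2 + ⟪g, z - x⟫) * hLβη

end Smooth

section Average

variable {F : Type*} [NormedAddCommGroup F] [InnerProductSpace ℝ F]
variable {ι : Type*} [Fintype ι]

lemma sum_sq_norm_sub_le_sum_sq_norm {v : ι → F} {w : F}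
    (hw : ∑ i, v i = (Fintype.card ι : ℝ) • w) : ∑ i, ‖v i - w‖ ^ 2 ≤ ∑ i, ‖v i‖ ^ 2 := by
  have h : ∑ i, ‖v i - w‖ ^ 2 = ∑ i, ‖v i‖ ^ 2 - Fintype.card ι * ‖w‖ ^ 2 := by
    simp only [norm_sub_sq_real, Finset.sum_add_distrib, Finset.sum_sub_distrib,
      ← Finset.mul_sum, ← sum_inner, hw, real_inner_smul_left, real_inner_self_eq_norm_sq,
      Finset.sum_const, Finset.card_univ, nsmul_eq_mul]
    ring
  rw [h]
  have : 0 ≤ (Fintype.card ι : ℝ) * ‖w‖ ^ 2 := by positivity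
  linarith

variable {f : ι → F → ℝ} {favg : F → ℝ}

lemma convexOn_average (hfavg : ∀ x, favg x = 1 / (Fintype.card ι : ℝ) * ∑ i, f i x)
    (hf : ∀ i, ConvexOn ℝ univ (f i)) : ConvexOn ℝ univ favg := by
  have hsum : ConvexOn ℝ univ (∑ i, f i) :=
    Finset.sum_induction _ (ConvexOn ℝ univ) (fun _ _ ↦ ConvexOn.add)
      (convexOn_const 0 convex_univ) fun i _ ↦ hf i
  have := hsum.smul (c := 1 / (Fintype.card ι : ℝ)) (by positivity)
  rw [funext hfavg]
  simpa only [smul_eq_mul, Finset.sum_apply] using this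

variable [CompleteSpace F]

lemma hasGradientAt_average (hfavg : ∀ x, favg x = 1 / (Fintype.card ι : ℝ) * ∑ i, f i x)
    {x : F} (hf : ∀ i, DifferentiableAt ℝ (f i) x) :
    HasGradientAt favg ((1 / (Fintype.card ι : ℝ)) • ∑ i, ∇ (f i) x) x := by
  rw [funext hfavg, hasGradientAt_iff_hasFDerivAt, map_smul, map_sum]
  exact (HasFDerivAt.fun_sum fun i _ ↦ (hf i).hasGradientAt.hasFDerivAt).const_mul _

lemma sum_gradient_eq_card_smul [Nonempty ι]
    (hfavg : ∀ x, favg x = 1 / (Fintype.card ι : ℝ) * ∑ i, f i x) {x : F}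
    (hf : ∀ i, DifferentiableAt ℝ (f i) x) :
    ∑ i, ∇ (f i) x = (Fintype.card ι : ℝ) • ∇ favg x := by
  rw [(hasGradientAt_average hfavg hf).gradient, smul_smul, mul_one_div_cancel (by simp),
    one_smul]

lemma hasLipschitzGradient_average [Nonempty ι] {L : ℝ}
    (hfavg : ∀ x, favg x = 1 / (Fintype.card ι : ℝ) * ∑ i, f i x)
    (hf : ∀ i, Differentiable ℝ (f i)) (hL : ∀ i, HasLipschitzGradient L (f i)) :
    HasLipschitzGradient L favg := fun x y ↦ by
  rw [(hasGradientAt_average hfavg fun i ↦ hf i x).gradient,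
    (hasGradientAt_average hfavg fun i ↦ hf i y).gradient, ← smul_sub, ← Finset.sum_sub_distrib,
    norm_smul, Real.norm_of_nonneg (by positivity)]
  calc 1 / (Fintype.card ι : ℝ) * ‖∑ i, (∇ (f i) x - ∇ (f i) y)‖
      ≤ 1 / (Fintype.card ι : ℝ) * ∑ _i : ι, L * ‖x - y‖ := by
        gcongr
        exact (norm_sum_le _ _).trans (Finset.sum_le_sum fun i _ ↦ hL i x y)
    _ = L * ‖x - y‖ := by
        rw [Finset.sum_const, Finset.card_univ, nsmul_eq_mul]
        field_simp

lemma sum_bregman_eq_card_mul [Nonempty ι]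
    (hfavg : ∀ x, favg x = 1 / (Fintype.card ι : ℝ) * ∑ i, f i x)
    (hf : ∀ i, Differentiable ℝ (f i)) (x y : F) :
    ∑ i, (f i x - f i y - ⟪∇ (f i) y, x - y⟫)
      = Fintype.card ι * (favg x - favg y - ⟪∇ favg y, x - y⟫) := by
  have hsum : ∀ z, ∑ i, f i z = Fintype.card ι * favg z := fun z ↦ by
    rw [hfavg, ← mul_assoc, mul_one_div_cancel (by simp), one_mul]
  rw [Finset.sum_sub_distrib, Finset.sum_sub_distrib, ← sum_inner,
    sum_gradient_eq_card_smul hfavg fun i ↦ hf i y, real_inner_smul_left, hsum, hsum]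
  ring

lemma sum_svrg_gradient_eq_card_smul [Nonempty ι]
    (hfavg : ∀ x, favg x = 1 / (Fintype.card ι : ℝ) * ∑ i, f i x)
    (hf : ∀ i, Differentiable ℝ (f i)) (x xt : F) :
    ∑ i, (∇ (f i) x - ∇ (f i) xt + ∇ favg xt) = (Fintype.card ι : ℝ) • ∇ favg x := by
  rw [Finset.sum_add_distrib, Finset.sum_sub_distrib,
    sum_gradient_eq_card_smul hfavg fun i ↦ hf i x, sum_gradient_eq_card_smul hfavg fun i ↦ hf i xt,
    Finset.sum_const, Finset.card_univ,
    ← Nat.cast_smul_eq_nsmul ℝ, sub_add_cancel]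

lemma sum_sq_norm_svrg_sub_le [Nonempty ι] {L : ℝ} (hL₀ : 0 < L)
    (hfavg : ∀ x, favg x = 1 / (Fintype.card ι : ℝ) * ∑ i, f i x)
    (hc : ∀ i, ConvexOn ℝ univ (f i)) (hf : ∀ i, Differentiable ℝ (f i))
    (hL : ∀ i, HasLipschitzGradient L (f i)) {xstar : F} (hstar : ∇ favg xstar = 0) (x xt : F) :
    ∑ i, ‖∇ (f i) x - ∇ (f i) xt + ∇ favg xt - ∇ favg x‖ ^ 2
      ≤ Fintype.card ι * (4 * L * ((favg x - favg xstar) + (favg xt - favg xstar))) := by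
  have hmean :
      ∑ i, (∇ (f i) x - ∇ (f i) xt) = (Fintype.card ι : ℝ) • (∇ favg x - ∇ favg xt) := by
    rw [Finset.sum_sub_distrib, sum_gradient_eq_card_smul hfavg fun i ↦ hf i x,
      sum_gradient_eq_card_smul hfavg fun i ↦ hf i xt, smul_sub]
  have hpoint : ∀ i, ‖∇ (f i) x - ∇ (f i) xt‖ ^ 2
      ≤ 4 * L * (f i x - f i xstar - ⟪∇ (f i) xstar, x - xstar⟫)
        + 4 * L * (f i xt - f i xstar - ⟪∇ (f i) xstar, xt - xstar⟫) := fun i ↦ by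
    have hpar := parallelogram_law_with_norm ℝ (∇ (f i) x - ∇ (f i) xstar)
      (∇ (f i) xt - ∇ (f i) xstar)
    rw [sub_sub_sub_cancel_right] at hpar
    have hx := (hc i).sq_norm_gradient_sub_le hL₀ (hL i) (hf i) x xstar
    have hxt := (hc i).sq_norm_gradient_sub_le hL₀ (hL i) (hf i) xt xstar
    nlinarith [sq_nonneg ‖∇ (f i) x - ∇ (f i) xstar + (∇ (f i) xt - ∇ (f i) xstar)‖]
  calc ∑ i, ‖∇ (f i) x - ∇ (f i) xt + ∇ favg xt - ∇ favg x‖ ^ 2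
      = ∑ i, ‖(∇ (f i) x - ∇ (f i) xt) - (∇ favg x - ∇ favg xt)‖ ^ 2 := by
        congr! 3; abel
    _ ≤ ∑ i, ‖∇ (f i) x - ∇ (f i) xt‖ ^ 2 := sum_sq_norm_sub_le_sum_sq_norm hmean
    _ ≤ ∑ i, (4 * L * (f i x - f i xstar - ⟪∇ (f i) xstar, x - xstar⟫)
        + 4 * L * (f i xt - f i xstar - ⟪∇ (f i) xstar, xt - xstar⟫)) :=
        Finset.sum_le_sum fun i _ ↦ hpoint i
    _ = Fintype.card ι * (4 * L * ((favg x - favg xstar) + (favg xt - favg xstar))) := by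
        rw [Finset.sum_add_distrib, ← Finset.mul_sum, ← Finset.mul_sum,
          sum_bregman_eq_card_mul hfavg hf, sum_bregman_eq_card_mul hfavg hf, hstar]
        simp only [inner_zero_left, sub_zero]
        ring

lemma sum_apply_svrg_step_le [Nonempty ι] {L β η : ℝ} (hL₀ : 0 < L) (hβ : 1 < β)
    (hη : η = 1 / (L * β)) (hfavg : ∀ x, favg x = 1 / (Fintype.card ι : ℝ) * ∑ i, f i x)
    (hc : ∀ i, ConvexOn ℝ univ (f i)) (hf : ∀ i, Differentiable ℝ (f i))
    (hL : ∀ i, HasLipschitzGradient L (f i)) {xstar : F} (hstar : ∇ favg xstar = 0) (x xt : F) :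
    ∑ i, favg (x - η • (∇ (f i) x - ∇ (f i) xt + ∇ favg xt))
      ≤ Fintype.card ι * favg xstar
        + Fintype.card ι * (2 / (β - 1) * ((favg x - favg xstar) + (favg xt - favg xstar)))
        + L * β / 2 * ∑ i, (‖xstar - x‖ ^ 2
          - ‖xstar - (x - η • (∇ (f i) x - ∇ (f i) xt + ∇ favg xt))‖ ^ 2) := by
  have hfavgdiff : Differentiable ℝ favg := fun z ↦
    (hasGradientAt_average hfavg fun i ↦ hf i z).differentiableAt
  have hstep := fun i ↦ (hasLipschitzGradient_average hfavg hf hL).apply_sub_smul_le hL₀ hβ hη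
    hfavgdiff x xstar (∇ (f i) x - ∇ (f i) xt + ∇ favg xt)
  have hsum := Finset.sum_le_sum fun i (_ : i ∈ Finset.univ) ↦ hstep i
  simp only [Finset.sum_add_distrib, Finset.sum_const, Finset.card_univ, nsmul_eq_mul,
    ← Finset.mul_sum, ← Finset.sum_div, ← sum_inner, sum_svrg_gradient_eq_card_smul hfavg hf,
    real_inner_smul_left] at hsum
  have hfirst := mul_le_mul_of_nonneg_left
    ((convexOn_average hfavg hc).add_inner_gradient_le_s8 (hfavgdiff x) xstar)
    (Nat.cast_nonneg (α := ℝ) (Fintype.card ι))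
  have hvar :
      (∑ i, ‖∇ (f i) x - ∇ (f i) xt + ∇ favg xt - ∇ favg x‖ ^ 2) / (2 * (L * (β - 1)))
      ≤ Fintype.card ι * (2 / (β - 1) * ((favg x - favg xstar) + (favg xt - favg xstar))) := by
    rw [div_le_iff₀ (by nlinarith)]
    refine (sum_sq_norm_svrg_sub_le hL₀ hfavg hc hf hL hstar x xt).trans_eq ?_
    field_simp [sub_ne_zero.2 hβ.ne']
    ring
  linarith

end Average

/-- one-step inner bound for smooth VR-SGD; the expectation over the
uniformly random index `i` is the average over `i : Fin n`. -/
theorem stmt_8 (d n : ℕ) (hn : 0 < n) (L β η : ℝ) (hL : 0 < L) (hβ : 1 < β)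
    (hη : η = 1 / (L * β))
    (f : Fin n → EuclideanSpace ℝ (Fin d) → ℝ)
    (hconv : ∀ i, ConvexOn ℝ Set.univ (f i))
    (hdiff : ∀ i, Differentiable ℝ (f i))
    (hlip : ∀ i x y, ‖gradient (f i) x - gradient (f i) y‖ ≤ L * ‖x - y‖)
    (favg : EuclideanSpace ℝ (Fin d) → ℝ)
    (hfavg : ∀ x, favg x = (1 / n : ℝ) * ∑ i, f i x)
    (xstar : EuclideanSpace ℝ (Fin d)) (hmin : ∀ x, favg xstar ≤ favg x)
    (xk xt : EuclideanSpace ℝ (Fin d))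
    (xnext : Fin n → EuclideanSpace ℝ (Fin d))
    (hxnext : ∀ i, xnext i = xk -
      η • (gradient (f i) xk - gradient (f i) xt + gradient favg xt)) :
    (1 / n : ℝ) * ∑ i, (favg (xnext i)) - favg xstar
      ≤ (2 / (β - 1)) * ((favg xk - favg xstar) + (favg xt - favg xstar))
        + (L * β / 2) *
          ((1 / n : ℝ) * ∑ i, (‖xstar - xk‖ ^ 2 - ‖xstar - xnext i‖ ^ 2)) := by
  have : Nonempty (Fin n) := ⟨⟨0, hn⟩⟩
  have hstar : ∇ favg xstar = 0 := by
    have hloc : IsLocalMin favg xstar := Filter.Eventually.of_forall hmin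
    rw [gradient, hloc.fderiv_eq_zero, map_zero]
  have hsum :=
    sum_apply_svrg_step_le hL hβ hη (by simpa using hfavg) hconv hdiff hlip hstar xk xt
  simp only [Fintype.card_fin, ← hxnext] at hsum
  have hn' : (0 : ℝ) < n := by exact_mod_cast hn
  calc 1 / n * ∑ i, favg (xnext i) - favg xstar
      ≤ 1 / n * (n * favg xstar
          + n * (2 / (β - 1) * ((favg xk - favg xstar) + (favg xt - favg xstar)))
          + L * β / 2 * ∑ i, (‖xstar - xk‖ ^ 2 - ‖xstar - xnext i‖ ^ 2)) - favg xstar := by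
        gcongr
    _ = _ := by
        field_simp
        ring
end
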